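/- Let H₁ and H₂ be complex Hilbert spaces, X : H₂ → H₁ and Y : H₁ → H₂ bounded linear operators, and let T be the off-diagonal operator matrix on H₁ ⊕ H₂ given by T(x₁, x₂) = (X x₂, Y x₁). Set S = X*X + YY* (an operator on H₂). Then w(T)⁴ ≥ (1/16)‖S‖² + (1/4)c(YX)² + (1/8)m(YXS + S(YX)). -/

import Mathlib

noncomputable def numRadius {H : Type*} [NormedAddCommGroup H] [InnerProductSpace ℂ H]
    (T : H →L[ℂ] H) : ℝ :=
  sSup {r : ℝ | ∃ x : H, ‖x‖ = 1 ∧ r = ‖(inner ℂ (T x) x : ℂ)‖}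

noncomputable def crawford {H : Type*} [NormedAddCommGroup H] [InnerProductSpace ℂ H]
    (T : H →L[ℂ] H) : ℝ :=
  sInf {r : ℝ | ∃ x : H, ‖x‖ = 1 ∧ r = ‖(inner ℂ (T x) x : ℂ)‖}

noncomputable def reOp {H : Type*} [NormedAddCommGroup H] [InnerProductSpace ℂ H]
    [CompleteSpace H] (A : H →L[ℂ] H) : H →L[ℂ] H :=
  (2 : ℂ)⁻¹ • (A + ContinuousLinearMap.adjoint A)

noncomputable def cNum {H : Type*} [NormedAddCommGroup H] [InnerProductSpace ℂ H]
    [CompleteSpace H] (T : H →L[ℂ] H) : ℝ :=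
  ⨅ θ : ℝ, sInf {r : ℝ | ∃ x : H, ‖x‖ = 1 ∧ r = ‖reOp (Complex.exp (θ * Complex.I) • T) x‖}

/-!
For `‖ζ‖ = 1` put `B = ζ X + ζ̄ Y*`. Evaluating `T` at `(e, g)` gives
`Re ⟪B g, e⟫ = Re (ζ̄ ⟪T (e, g), (e, g)⟫) ≤ w(T) (‖e‖² + ‖g‖²)`, hence `‖B‖ ≤ 2 w(T)`.
On the other hand `B* B = S + 2 R` with `R = Re (ζ² Y X)`, so for a unit vector `x`
`16 w(T)⁴ ≥ ‖S x + 2 R x‖² = ‖S x‖² + 2 Re (ζ² ⟪x, P x⟫) + 4 ‖R x‖²`, where `P = Y X S + S Y X`.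
The phase `ζ²` is chosen to make the middle term `2 |⟪P x, x⟫| ≥ 2 m(P)`; the last term is at
least `4 c(Y X)²`, and the supremum over `x` turns `‖S x‖²` into `‖S‖²`.
-/

open ContinuousLinearMap Complex ComplexConjugate

section Numerical

variable {H : Type*} [NormedAddCommGroup H] [InnerProductSpace ℂ H]

lemma numRadius_nonneg (T : H →L[ℂ] H) : 0 ≤ numRadius T :=
  Real.sSup_nonneg (by rintro r ⟨x, -, rfl⟩; positivity)

lemma norm_inner_le_numRadius {T : H →L[ℂ] H} {x : H} (hx : ‖x‖ = 1) :
    ‖inner ℂ (T x) x‖ ≤ numRadius T := by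
  refine le_csSup ⟨‖T‖, ?_⟩ ⟨x, hx, rfl⟩
  rintro r ⟨y, hy, rfl⟩
  simpa [hy] using norm_inner_le_norm (𝕜 := ℂ) (T y) y |>.trans
    (mul_le_mul_of_nonneg_right (T.le_opNorm y) (norm_nonneg y))

lemma norm_inner_le_numRadius_mul_sq (T : H →L[ℂ] H) (v : H) :
    ‖inner ℂ (T v) v‖ ≤ numRadius T * ‖v‖ ^ 2 := by
  rcases eq_or_ne v 0 with rfl | hv
  · simp
  have h := norm_inner_le_numRadius (T := T) (x := (‖v‖ : ℂ)⁻¹ • v)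
    (by simp [norm_smul, norm_ne_zero_iff.mpr hv])
  rw [map_smul, inner_smul_left, inner_smul_right, norm_mul, norm_mul] at h
  simp only [map_inv₀, conj_ofReal, norm_inv, norm_real, Real.norm_eq_abs, abs_norm] at h
  rw [← div_le_iff₀ (by positivity)]
  calc _ = ‖v‖⁻¹ * (‖v‖⁻¹ * ‖inner ℂ (T v) v‖) := by ring
    _ ≤ _ := h

lemma crawford_le_norm_inner {T : H →L[ℂ] H} {x : H} (hx : ‖x‖ = 1) :
    crawford T ≤ ‖inner ℂ (T x) x‖ :=
  csInf_le ⟨0, by rintro r ⟨y, -, rfl⟩; positivity⟩ ⟨x, hx, rfl⟩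

-- The unit sphere of the zero space is empty, and `sInf ∅ = 0` in `ℝ`.
lemma crawford_of_subsingleton [Subsingleton H] (T : H →L[ℂ] H) : crawford T = 0 := by
  simp [crawford, Subsingleton.elim _ (0 : H)]

end Numerical

section RealPart

variable {H : Type*} [NormedAddCommGroup H] [InnerProductSpace ℂ H] [CompleteSpace H]

lemma cNum_nonneg (A : H →L[ℂ] H) : 0 ≤ cNum A :=
  Real.iInf_nonneg fun _ ↦ Real.sInf_nonneg (by rintro r ⟨x, -, rfl⟩; positivity)

lemma cNum_le_norm_reOp_apply (A : H →L[ℂ] H) {ν : ℂ} (hν : ‖ν‖ = 1) {x : H} (hx : ‖x‖ = 1) :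
    cNum A ≤ ‖reOp (ν • A) x‖ := by
  have hν' : exp (arg ν * I) = ν := by simpa [hν] using norm_mul_exp_arg_mul_I ν
  refine (ciInf_le ⟨0, ?_⟩ (arg ν)).trans ?_
  · rintro r ⟨θ, rfl⟩
    exact Real.sInf_nonneg (by rintro r ⟨y, -, rfl⟩; positivity)
  · refine csInf_le ⟨0, by rintro r ⟨y, -, rfl⟩; positivity⟩ ⟨x, hx, ?_⟩
    rw [hν']

lemma cNum_of_subsingleton [Subsingleton H] (A : H →L[ℂ] H) : cNum A = 0 := by
  simp [cNum, Subsingleton.elim _ (0 : H)]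

lemma re_inner_reOp_apply {S : H →L[ℂ] H} (hS : IsSelfAdjoint S) (B : H →L[ℂ] H) (x : H) :
    re (inner ℂ (S x) (reOp B x)) = 2⁻¹ * re (inner ℂ x ((B ∘L S + S ∘L B) x)) := by
  have hSB : re (inner ℂ (S x) (B x)) = re (inner ℂ x (S (B x))) := by
    rw [← adjoint_inner_right, hS.adjoint_eq]
  have hBS : re (inner ℂ (S x) (adjoint B x)) = re (inner ℂ x (B (S x))) := by
    rw [adjoint_inner_right, ← inner_conj_symm, conj_re]
  rw [reOp, smul_apply, inner_smul_right, add_apply, inner_add_right, ← ofReal_ofNat, ← ofReal_inv,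
    re_ofReal_mul, add_re, hSB, hBS, add_apply, comp_apply, comp_apply, inner_add_right, add_re,
    add_comm]

end RealPart

section Operator

variable {𝕜 E F : Type*} [RCLike 𝕜] [NormedAddCommGroup E] [InnerProductSpace 𝕜 E]
  [NormedAddCommGroup F] [InnerProductSpace 𝕜 F]

lemma opNorm_le_of_re_inner_le (B : E →L[𝕜] F) {C : ℝ} (hC : 0 ≤ C)
    (h : ∀ e g, RCLike.re (inner 𝕜 (B g) e) ≤ C / 2 * (‖e‖ ^ 2 + ‖g‖ ^ 2)) : ‖B‖ ≤ C := by
  refine B.opNorm_le_bound hC fun g ↦ ?_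
  rcases eq_or_ne (B g) 0 with hBg | hBg
  · simpa [hBg] using by positivity
  have hBg' : 0 < ‖B g‖ := norm_pos_iff.mpr hBg
  have hg : 0 < ‖g‖ := norm_pos_iff.mpr fun h ↦ hBg (by simp [h])
  -- test against the multiple of `B g` that has the same norm as `g`
  have key := h (((‖g‖ / ‖B g‖ : ℝ) : 𝕜) • B g) g
  rw [inner_smul_real_right, inner_self_eq_norm_sq_to_K, norm_smul, RCLike.norm_ofReal,
    abs_of_nonneg (by positivity), div_mul_cancel₀ _ hBg'.ne'] at key
  simp only [RCLike.smul_re, ← RCLike.ofReal_pow, RCLike.ofReal_re] at key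
  have hcancel : ‖g‖ / ‖B g‖ * ‖B g‖ ^ 2 = ‖g‖ * ‖B g‖ := by field_simp
  rw [hcancel] at key
  nlinarith

lemma opNorm_sq_le_of_unit_norm (f : E →L[𝕜] F) {K : ℝ} (hK : 0 ≤ K)
    (h : ∀ x, ‖x‖ = 1 → ‖f x‖ ^ 2 ≤ K) : ‖f‖ ^ 2 ≤ K := by
  have := f.opNorm_le_of_unit_norm (Real.sqrt_nonneg K) fun x hx ↦ Real.le_sqrt_of_sq_le (h x hx)
  calc ‖f‖ ^ 2 ≤ Real.sqrt K ^ 2 := by gcongr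
    _ = K := Real.sq_sqrt hK

end Operator

lemma Complex.exists_norm_eq_one_sq_mul_eq_norm (d : ℂ) : ∃ ζ : ℂ, ‖ζ‖ = 1 ∧ ζ ^ 2 * d = ‖d‖ := by
  refine ⟨exp (-(arg d / 2 : ℝ) * I), by simpa using norm_exp_ofReal_mul_I (-(arg d / 2)), ?_⟩
  have hphase : exp (-(arg d / 2 : ℝ) * I) ^ 2 * exp (arg d * I) = 1 := by
    rw [sq, ← exp_add, ← exp_add]
    push_cast
    ring_nf
    exact exp_zero
  calc _ = exp (-(arg d / 2 : ℝ) * I) ^ 2 * (‖d‖ * exp (arg d * I)) := by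
        rw [norm_mul_exp_arg_mul_I]
    _ = ‖d‖ := by rw [mul_left_comm, hphase, mul_one]

section OffDiagonal

variable {H₁ H₂ : Type*} [NormedAddCommGroup H₁] [InnerProductSpace ℂ H₁]
  [NormedAddCommGroup H₂] [InnerProductSpace ℂ H₂] [CompleteSpace H₁] [CompleteSpace H₂]
  (X : H₂ →L[ℂ] H₁) (Y : H₁ →L[ℂ] H₂)

lemma adjoint_comp_smul_add_conj_smul_adjoint {ζ : ℂ} (hζ : ‖ζ‖ = 1) :
    adjoint (ζ • X + conj ζ • adjoint Y) ∘L (ζ • X + conj ζ • adjoint Y) =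
      adjoint X ∘L X + Y ∘L adjoint Y + (2 : ℂ) • reOp (ζ ^ 2 • (Y ∘L X)) := by
  have hζζ : conj ζ * ζ = 1 := by rw [conj_mul', hζ]; norm_num
  simp only [reOp, map_add, map_smulₛₗ, adjoint_adjoint, adjoint_comp, add_comp, comp_add,
    smul_comp, comp_smul, smul_add, smul_smul, map_pow, conj_conj]
  rw [mul_comm ζ, hζζ]
  module

variable {X Y} {T : WithLp 2 (H₁ × H₂) →L[ℂ] WithLp 2 (H₁ × H₂)}
  (hT : ∀ x : WithLp 2 (H₁ × H₂),
      WithLp.equiv 2 (H₁ × H₂) (T x) =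
        (X (WithLp.equiv 2 (H₁ × H₂) x).2, Y (WithLp.equiv 2 (H₁ × H₂) x).1))
include hT

lemma re_conj_mul_inner_offDiag (ζ : ℂ) (e : H₁) (g : H₂) :
    re (conj ζ * inner ℂ (T (WithLp.toLp 2 (e, g))) (WithLp.toLp 2 (e, g))) =
      re (inner ℂ ((ζ • X + conj ζ • adjoint Y) g) e) := by
  have h := hT (WithLp.toLp 2 (e, g))
  simp only [WithLp.equiv_apply, Prod.ext_iff] at h
  rw [WithLp.prod_inner_apply, h.1, h.2]
  simp only [add_apply, smul_apply, inner_add_left, inner_smul_left, adjoint_inner_left, conj_conj]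
  rw [← inner_conj_symm g (Y e)]
  simp only [mul_add, add_re, mul_re, conj_re, conj_im]
  ring

lemma norm_smul_add_conj_smul_adjoint_le {ζ : ℂ} (hζ : ‖ζ‖ = 1) :
    ‖ζ • X + conj ζ • adjoint Y‖ ≤ 2 * numRadius T := by
  refine opNorm_le_of_re_inner_le _ (by linarith [numRadius_nonneg T]) fun e g ↦ ?_
  change re _ ≤ _
  rw [← re_conj_mul_inner_offDiag hT]
  calc _ ≤ ‖conj ζ * inner ℂ (T (WithLp.toLp 2 (e, g))) (WithLp.toLp 2 (e, g))‖ := re_le_norm _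
    _ ≤ numRadius T * ‖WithLp.toLp 2 (e, g)‖ ^ 2 := by
      rw [norm_mul, RCLike.norm_conj, hζ, one_mul]
      exact norm_inner_le_numRadius_mul_sq T _
    _ = _ := by simp only [WithLp.prod_norm_sq_eq_of_L2, WithLp.toLp_fst, WithLp.toLp_snd]; ring

lemma norm_apply_sq_add_le_numRadius_pow_four (S : H₂ →L[ℂ] H₂)
    (hS : S = adjoint X ∘L X + Y ∘L adjoint Y) {x : H₂} (hx : ‖x‖ = 1) :
    ‖S x‖ ^ 2 + 4 * cNum (Y ∘L X) ^ 2 + 2 * crawford ((Y ∘L X) ∘L S + S ∘L (Y ∘L X)) ≤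
      16 * numRadius T ^ 4 := by
  set A := Y ∘L X
  set P := A ∘L S + S ∘L A
  obtain ⟨ζ, hζ, hζd⟩ := exists_norm_eq_one_sq_mul_eq_norm (inner ℂ x (P x))
  set R := reOp (ζ ^ 2 • A)
  have hS_sa : IsSelfAdjoint S := by
    simp [isSelfAdjoint_iff', hS, adjoint_comp]
  have hBB : ‖S x + (2 : ℂ) • R x‖ ≤ 4 * numRadius T ^ 2 := by
    set B := ζ • X + conj ζ • adjoint Y
    calc _ = ‖(adjoint B ∘L B) x‖ := by
          rw [adjoint_comp_smul_add_conj_smul_adjoint X Y hζ, ← hS]; rfl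
      _ ≤ ‖B‖ ^ 2 := by simpa [hx, norm_adjoint_comp_self, sq] using (adjoint B ∘L B).le_opNorm x
      _ ≤ (2 * numRadius T) ^ 2 := by gcongr; exact norm_smul_add_conj_smul_adjoint_le hT hζ
      _ = 4 * numRadius T ^ 2 := by ring
  have hcross : re (inner ℂ (S x) (R x)) = 2⁻¹ * ‖inner ℂ x (P x)‖ := by
    have hP : (ζ ^ 2 • A) ∘L S + S ∘L (ζ ^ 2 • A) = ζ ^ 2 • P := by
      simp only [P, smul_comp, comp_smul, smul_add]
    rw [re_inner_reOp_apply hS_sa, hP, smul_apply, inner_smul_right, hζd, ofReal_re]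
  have hm : crawford P ≤ ‖inner ℂ x (P x)‖ := by
    rw [← inner_conj_symm, RCLike.norm_conj]
    exact crawford_le_norm_inner hx
  have hc : cNum A ≤ ‖R x‖ := cNum_le_norm_reOp_apply A (by simp [hζ]) hx
  have hexpand : ‖S x + (2 : ℂ) • R x‖ ^ 2 =
      ‖S x‖ ^ 2 + 4 * re (inner ℂ (S x) (R x)) + 4 * ‖R x‖ ^ 2 := by
    rw [@norm_add_sq ℂ, inner_smul_right, norm_smul]
    simp only [RCLike.mul_re, RCLike.ofNat_re, RCLike.re_to_complex, RCLike.ofNat_im,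
      RCLike.im_to_complex, zero_mul, sub_zero, norm_ofNat]
    ring
  nlinarith [cNum_nonneg A, numRadius_nonneg T, norm_nonneg (S x + (2 : ℂ) • R x)]

end OffDiagonal

theorem numRadius_offdiag_pow_four_lower
    {H₁ H₂ : Type*} [NormedAddCommGroup H₁] [InnerProductSpace ℂ H₁]
    [NormedAddCommGroup H₂] [InnerProductSpace ℂ H₂]
    [CompleteSpace H₁] [CompleteSpace H₂]
    (X : H₂ →L[ℂ] H₁) (Y : H₁ →L[ℂ] H₂)
    (T : WithLp 2 (H₁ × H₂) →L[ℂ] WithLp 2 (H₁ × H₂))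
    (hT : ∀ x : WithLp 2 (H₁ × H₂),
      WithLp.equiv 2 (H₁ × H₂) (T x) =
        (X (WithLp.equiv 2 (H₁ × H₂) x).2, Y (WithLp.equiv 2 (H₁ × H₂) x).1))
    (S : H₂ →L[ℂ] H₂)
    (hS : S = (ContinuousLinearMap.adjoint X).comp X + Y.comp (ContinuousLinearMap.adjoint Y)) :
    (numRadius T) ^ 4 ≥ (1 / 16 : ℝ) * ‖S‖ ^ 2 + (1 / 4 : ℝ) * (cNum (Y.comp X)) ^ 2
      + (1 / 8 : ℝ) * crawford ((Y.comp X).comp S + S.comp (Y.comp X)) := by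
  rcases subsingleton_or_nontrivial H₂ with _ | _
  · have : 0 ≤ numRadius T ^ 4 := by positivity
    simpa [Subsingleton.elim S 0, cNum_of_subsingleton, crawford_of_subsingleton]
  have key := fun x (hx : ‖x‖ = 1) ↦ norm_apply_sq_add_le_numRadius_pow_four hT S hS hx
  obtain ⟨x₀, hx₀⟩ := exists_norm_eq H₂ zero_le_one
  have hS_le : ‖S‖ ^ 2 ≤ 16 * numRadius T ^ 4 - 4 * cNum (Y.comp X) ^ 2
      - 2 * crawford ((Y.comp X).comp S + S.comp (Y.comp X)) :=
    opNorm_sq_le_of_unit_norm S (by linarith [key x₀ hx₀, sq_nonneg ‖S x₀‖])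
      fun x hx ↦ by linarith [key x hx]
  linarith
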